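/- arXiv:1605.07671 — 4 statements merged into one kernel-verified Lean document; each statement's English description precedes it below -/
import Mathlib

section
/- Let G be a group. Semi-conjugacy is an equivalence relation on the set of group homomorphisms from G to Homeo₊(ℝ): it is reflexive, transitive, and (the nontrivial point) symmetric, i.e. if ρ₁ is semi-conjugate to ρ₂ via a proper non-decreasing map c, then ρ₂ is semi-conjugate to ρ₁. -/
/-- A non-decreasing map `c : ℝ → ℝ` is proper if its image is unbounded above and below. -/
def IsProperMonotone (c : ℝ → ℝ) : Prop :=
  Monotone c ∧ ¬ BddAbove (Set.range c) ∧ ¬ BddBelow (Set.range c)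

/-- `ρ₁` is semi-conjugate to `ρ₂` if there is a proper non-decreasing map `c : ℝ → ℝ`
with `c (ρ₁ g x) = ρ₂ g (c x)` for all `g` and `x`. -/
def SemiConjugate {G : Type*} [Group G] (ρ₁ ρ₂ : G →* (ℝ ≃o ℝ)) : Prop :=
  ∃ c : ℝ → ℝ, IsProperMonotone c ∧ ∀ (g : G) (x : ℝ), c (ρ₁ g x) = ρ₂ g (c x)

/-- Semi-conjugacy is an equivalence relation on homomorphisms `G →* Homeo₊(ℝ)`. -/
theorem semiConjugate_equivalence (G : Type*) [Group G] :
    Equivalence (SemiConjugate (G := G)) := by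
  constructor
  · -- reflexive
    intro ρ
    refine ⟨id, ⟨monotone_id, ?_, ?_⟩, fun g x => rfl⟩
    · simpa using not_bddAbove_univ (α := ℝ)
    · simpa using not_bddBelow_univ (α := ℝ)
  · -- symmetric
    rintro ρ₁ ρ₂ ⟨c, ⟨hm, hA, hB⟩, heq⟩
    set d : ℝ → ℝ := fun y => sSup {x | c x ≤ y} with hd
    have hne : ∀ y : ℝ, {x | c x ≤ y}.Nonempty := by
      intro y
      obtain ⟨z, ⟨x, rfl⟩, hz⟩ := (not_bddBelow_iff.mp hB) y
      exact ⟨x, hz.le⟩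
    have hbdd : ∀ y : ℝ, BddAbove {x | c x ≤ y} := by
      intro y
      obtain ⟨z, ⟨x₀, rfl⟩, hz⟩ := (not_bddAbove_iff.mp hA) y
      refine ⟨x₀, fun x hx => ?_⟩
      by_contra h
      exact absurd (hm (le_of_not_ge h)) (not_le.mpr (lt_of_le_of_lt hx hz))
    have hdm : Monotone d := by
      intro y y' hyy'
      exact csSup_le_csSup (hbdd y') (hne y) (fun x hx => le_trans hx hyy')
    have hge : ∀ x : ℝ, x ≤ d (c x) := fun x => le_csSup (hbdd (c x)) (le_refl (c x))
    refine ⟨d, ⟨hdm, ?_, ?_⟩, ?_⟩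
    · rw [not_bddAbove_iff]
      intro M
      exact ⟨d (c (M + 1)), ⟨c (M + 1), rfl⟩,
        lt_of_lt_of_le (by linarith) (hge (M + 1))⟩
    · rw [not_bddBelow_iff]
      intro M
      refine ⟨d (c (M - 1) - 1), ⟨_, rfl⟩, ?_⟩
      have : d (c (M - 1) - 1) ≤ M - 1 := by
        refine csSup_le (hne _) (fun x hx => ?_)
        by_contra h
        have h2 : c (M - 1) ≤ c x := hm (le_of_not_ge h)
        simp only [Set.mem_setOf_eq] at hx
        linarith
      linarith
    · intro g y
      have hset : {x | c x ≤ ρ₂ g y} = (ρ₁ g) '' {x | c x ≤ y} := by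
        ext x
        constructor
        · intro hx
          refine ⟨(ρ₁ g).symm x, ?_, (ρ₁ g).apply_symm_apply x⟩
          have h1 : (ρ₁ g).symm x = ρ₁ g⁻¹ x := by
            rw [map_inv]; rfl
          have h2 : c (ρ₁ g⁻¹ x) = ρ₂ g⁻¹ (c x) := heq g⁻¹ x
          have h3 : ρ₂ g⁻¹ (c x) ≤ ρ₂ g⁻¹ (ρ₂ g y) := by
            exact (ρ₂ g⁻¹).monotone hx
          have h4 : ρ₂ g⁻¹ (ρ₂ g y) = y := by
            rw [map_inv]; exact (ρ₂ g).symm_apply_apply y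
          simp only [Set.mem_setOf_eq, h1, h2]
          rw [h4] at h3; exact h3
        · rintro ⟨x', hx', rfl⟩
          have : c (ρ₁ g x') = ρ₂ g (c x') := heq g x'
          simp only [Set.mem_setOf_eq, this]
          exact (ρ₂ g).monotone hx'
      show sSup {x | c x ≤ ρ₂ g y} = ρ₁ g (d y)
      rw [hset, ← OrderIso.map_csSup' (ρ₁ g) (hne y) (hbdd y)]
  · -- transitive
    rintro ρ₁ ρ₂ ρ₃ ⟨c₁, ⟨hm₁, hA₁, hB₁⟩, he₁⟩ ⟨c₂, ⟨hm₂, hA₂, hB₂⟩, he₂⟩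
    refine ⟨c₂ ∘ c₁, ⟨hm₂.comp hm₁, ?_, ?_⟩, fun g x => by
      simp only [Function.comp_apply, he₁ g x, he₂ g (c₁ x)]⟩
    · rw [not_bddAbove_iff]
      intro M
      obtain ⟨z, ⟨x, rfl⟩, hz⟩ := (not_bddAbove_iff.mp hA₂) M
      obtain ⟨w, ⟨x', rfl⟩, hw⟩ := (not_bddAbove_iff.mp hA₁) x
      exact ⟨c₂ (c₁ x'), ⟨x', rfl⟩, lt_of_lt_of_le hz (hm₂ hw.le)⟩
    · rw [not_bddBelow_iff]
      intro M
      obtain ⟨z, ⟨x, rfl⟩, hz⟩ := (not_bddBelow_iff.mp hB₂) M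
      obtain ⟨w, ⟨x', rfl⟩, hw⟩ := (not_bddBelow_iff.mp hB₁) x
      exact ⟨c₂ (c₁ x'), ⟨x', rfl⟩, lt_of_le_of_lt (hm₂ hw.le) hz⟩
end

section
/- Let ψ, φ₁, φ₂ ∈ Homeo₊(ℝ) and let I ⊆ ℝ be an interval. If ψ is a weak conjugation from φ₁ to φ₂ that is strong on I, then there exists ψ̄ ∈ Homeo₊(ℝ) with ψ̄ ∘ φ₁ = φ₂ ∘ ψ̄, such that ψ̄(x) = ψ(x) for every x ∈ I, ψ̄(x) = ψ(x) for every x ∈ Fix(φ₁), and moreover ψ̄ agrees with ψ on I ∪ φ₁(I). -/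
/-- The set of fixed points of an orientation preserving homeomorphism of the line. -/
def FixedPts (φ : ℝ ≃o ℝ) : Set ℝ := {x | φ x = x}

/-- The set of points moved to the right. -/
def IncPts (φ : ℝ ≃o ℝ) : Set ℝ := {x | x < φ x}


/-!
Conjugating by `ψ` reduces the statement to `g = ψ φ₁ ψ⁻¹` and `h = φ₂`: they have the same fixed
points, move every other point in the same direction, and agree on the interval `J = ψ(I)`. The
required `θ` with `θ ∘ g = h ∘ θ` is built gap by gap, as the identity on `Fix g`. On a component
`C` of the complement of `Fix g` on which both maps move points to the right, pick `p ∈ C`, in `J`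
if possible. The orbits of `p` cut `C` into the fundamental intervals `[gⁿp, gⁿ⁺¹p)` and
`[hⁿp, hⁿ⁺¹p)`, and `θ := hⁿ ∘ A ∘ g⁻ⁿ` there, with `A` the affine map `[p, gp) → [p, hp)`. When
`p ∈ J` we have `gp = hp`, so `A = id`, and the orbit segment between `p` and a point of `J` stays
in `J`, where `g = h`; hence `θ = id` on `J`. Components on which the maps move points to the left
are handled through `g⁻¹` and `h⁻¹`. Finally `ψb = θ ∘ ψ`.
-/

namespace LineHomeo

open Set Filter

/-- The connected component of `Fᶜ` containing `x`; it is empty when `x ∈ F`. -/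
def gap (F : Set ℝ) (x : ℝ) : Set ℝ := {y | ∀ z ∈ uIcc x y, z ∉ F}

section Gap

variable {F : Set ℝ} {x y z : ℝ}

lemma notMem_of_mem_gap (hy : y ∈ gap F x) : y ∉ F := hy y right_mem_uIcc

lemma mem_gap_self (hx : x ∉ F) : x ∈ gap F x := by
  simpa [gap] using hx

lemma mem_gap_comm : y ∈ gap F x ↔ x ∈ gap F y := by
  simp only [gap, mem_ofPred_eq, uIcc_comm x y]

lemma mem_gap_trans (hy : y ∈ gap F x) (hz : z ∈ gap F y) : z ∈ gap F x := fun w hw =>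
  (uIcc_subset_uIcc_union_uIcc hw).elim (hy w) (hz w)

lemma gap_eq_of_mem (hy : y ∈ gap F x) : gap F y = gap F x :=
  ext fun _ => ⟨mem_gap_trans hy, mem_gap_trans (mem_gap_comm.1 hy)⟩

lemma ordConnected_gap : (gap F x).OrdConnected :=
  ordConnected_iff_uIcc_subset.2 fun _ ha _ hb _ hz w hw =>
    (uIcc_subset_uIcc_union_uIcc hw).elim (ha w) fun hw =>
      mem_gap_trans (mem_gap_comm.1 ha) hb w (uIcc_subset_uIcc_left hz hw)

end Gap

section Homeo

variable {g : ℝ ≃o ℝ} {F : Set ℝ} {p x y : ℝ}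

lemma mem_gap_apply (hF : ∀ z ∈ F, g z = z) (hx : x ∉ F) : g x ∈ gap F x := by
  intro z hz hzF
  have hgz := hF z hzF
  rcases eq_or_ne z x with rfl | hzx
  · exact hx hzF
  rcases le_total x (g x) with h | h
  · rw [uIcc_of_le h] at hz
    have := g.strictMono (lt_of_le_of_ne hz.1 hzx.symm)
    linarith [hz.2]
  · rw [uIcc_of_ge h] at hz
    have := g.strictMono (lt_of_le_of_ne hz.2 hzx)
    linarith [hz.1]

lemma apply_mem_gap (hx : x ∉ FixedPts g) : g x ∈ gap (FixedPts g) x :=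
  mem_gap_apply (fun _ hz => hz) hx

lemma zpow_apply_eq_self (hx : x ∈ FixedPts g) (k : ℤ) : (g ^ k) x = x :=
  MulAction.mem_stabilizer_iff.1 <|
    Subgroup.zpow_mem _ (MulAction.mem_stabilizer_iff.2 (show g • x = x from hx)) k

lemma zpow_apply_mem_gap (hx : x ∉ FixedPts g) (k : ℤ) : (g ^ k) x ∈ gap (FixedPts g) x :=
  mem_gap_apply (fun _ hz => zpow_apply_eq_self hz k) hx

lemma lt_apply_of_mem_gap (hy : y ∈ gap (FixedPts g) x) (hx : x < g x) : y < g y := by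
  by_contra! hyg
  have hcont : ContinuousOn (fun t => g t - t) (uIcc x y) :=
    (g.continuous.sub continuous_id).continuousOn
  obtain ⟨z, hz, hz0⟩ := intermediate_value_uIcc hcont
    (show (0 : ℝ) ∈ uIcc (g x - x) (g y - y) from mem_uIcc.2 (Or.inr ⟨by linarith, by linarith⟩))
  exact hy z hz (sub_eq_zero.1 hz0)

lemma fixedPts_inv (g : ℝ ≃o ℝ) : FixedPts g⁻¹ = FixedPts g :=
  ext fun _ => g.symm_apply_eq.trans eq_comm

lemma coe_pow {α : Type*} [LE α] (g : α ≃o α) (n : ℕ) : ⇑(g ^ n) = (⇑g)^[n] :=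
  (smul_iterate g n).symm

lemma zpow_add_one_apply {α : Type*} [LE α] (g : α ≃o α) (k : ℤ) (x : α) :
    (g ^ (k + 1)) x = g ((g ^ k) x) := by
  rw [← mul_self_zpow]; rfl

lemma strictMono_zpow_apply (hp : p < g p) : StrictMono fun k : ℤ => (g ^ k) p :=
  strictMono_int_of_lt_succ fun k => by
    rw [zpow_add_one_apply]
    exact lt_apply_of_mem_gap (zpow_apply_mem_gap hp.ne' k) hp

/-- A bounded monotone orbit would converge to a fixed point between its terms. -/
lemma exists_iterate_notMem_uIcc (hp : g p ≠ p) (hx : x ∈ gap (FixedPts g) p) :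
    ∃ n : ℕ, g^[n] p ∉ uIcc p x := by
  by_contra! hbdd
  have hrange : range (fun n => g^[n] p) ⊆ uIcc p x := range_subset_iff.2 hbdd
  obtain ⟨c, hc⟩ : ∃ c, Tendsto (fun n => g^[n] p) atTop (nhds c) := by
    rcases hp.lt_or_gt with hlt | hlt
    · exact ⟨_, tendsto_atTop_ciInf (g.monotone.antitone_iterate_of_map_le hlt.le)
        (isCompact_uIcc.bddBelow.mono hrange)⟩
    · exact ⟨_, tendsto_atTop_ciSup (g.monotone.monotone_iterate_of_le_map hlt.le)
        (isCompact_uIcc.bddAbove.mono hrange)⟩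
  exact hx c (isClosed_Icc.mem_of_tendsto hc (Eventually.of_forall hbdd))
    (isFixedPt_of_tendsto_iterate hc g.continuous.continuousAt)

end Homeo

noncomputable def rescale (a b p y : ℝ) : ℝ := p + (b - p) / (a - p) * (y - p)

section Rescale

variable {a b p : ℝ}

lemma rescale_strictMono (ha : p < a) (hb : p < b) : StrictMono (rescale a b p) := fun y z hyz => by
  have : 0 < (b - p) / (a - p) := div_pos (sub_pos.2 hb) (sub_pos.2 ha)
  unfold rescale; nlinarith

lemma rescale_mapsTo_Ico (ha : p < a) (hb : p < b) : MapsTo (rescale a b p) (Ico p a) (Ico p b) :=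
  fun y hy => by
    have hp : rescale a b p p = p := by simp [rescale]
    have hpa : rescale a b p a = b := by
      have := (sub_pos.2 ha).ne'
      unfold rescale; field_simp; ring
    refine ⟨?_, ?_⟩
    · simpa only [hp] using (rescale_strictMono ha hb).monotone hy.1
    · simpa only [hpa] using rescale_strictMono ha hb hy.2

lemma rescale_rescale (ha : a ≠ p) (hb : b ≠ p) (y : ℝ) : rescale b a p (rescale a b p y) = y := by
  have := sub_ne_zero.2 ha
  have := sub_ne_zero.2 hb
  unfold rescale; field_simp; ring

lemma rescale_self (ha : a ≠ p) (y : ℝ) : rescale a a p y = y := by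
  simp [rescale, sub_ne_zero.2 ha]

end Rescale

section Orbit

variable {g h : ℝ ≃o ℝ} {p x : ℝ} {n : ℤ}

lemma mem_Ico_zpow_apply_iff :
    x ∈ Ico ((g ^ n) p) ((g ^ (n + 1)) p) ↔ (g ^ n).symm x ∈ Ico p (g p) := by
  rw [zpow_add_one]
  simp only [mem_Ico, OrderIso.le_symm_apply, OrderIso.symm_apply_lt]
  rfl

lemma Ico_zpow_apply_subset_gap (hp : p ∉ FixedPts g) (n : ℤ) :
    Ico ((g ^ n) p) ((g ^ (n + 1)) p) ⊆ gap (FixedPts g) p :=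
  Ico_subset_Icc_self.trans <|
    ordConnected_gap.out (zpow_apply_mem_gap hp n) (zpow_apply_mem_gap hp (n + 1))

lemma exists_lt_zpow_apply (hp : p < g p) (hx : x ∈ gap (FixedPts g) p) :
    ∃ k : ℤ, x < (g ^ k) p := by
  rcases lt_or_ge x p with hxp | hpx
  · exact ⟨0, hxp⟩
  obtain ⟨n, hn⟩ := exists_iterate_notMem_uIcc hp.ne' hx
  have hpn : p ≤ g^[n] p := g.monotone.monotone_iterate_of_le_map hp.le n.zero_le
  refine ⟨n, ?_⟩
  rw [zpow_natCast, coe_pow]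
  by_contra! hnx
  exact hn (uIcc_of_le hpx ▸ ⟨hpn, hnx⟩)

lemma exists_zpow_apply_le (hp : p < g p) (hx : x ∈ gap (FixedPts g) p) :
    ∃ k : ℤ, (g ^ k) p ≤ x := by
  rcases le_total p x with hpx | hxp
  · exact ⟨0, hpx⟩
  have hp' : g⁻¹ p < p := g.symm_apply_lt.2 hp
  obtain ⟨n, hn⟩ := exists_iterate_notMem_uIcc hp'.ne (by rwa [fixedPts_inv])
  have hnp : (⇑(g⁻¹))^[n] p ≤ p :=
    g⁻¹.monotone.antitone_iterate_of_map_le hp'.le n.zero_le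
  refine ⟨-n, ?_⟩
  rw [zpow_neg, zpow_natCast, ← inv_pow, coe_pow]
  by_contra! hxn
  exact hn (uIcc_of_ge hxp ▸ ⟨hxn.le, hnp⟩)

/-- The index `n` of the fundamental interval `[gⁿ p, gⁿ⁺¹ p)` containing `x`, when `p < g p`
and `x` lies in the gap of `p`. -/
noncomputable def orbitIndex (g : ℝ ≃o ℝ) (p x : ℝ) : ℤ := sSup {k : ℤ | (g ^ k) p ≤ x}

lemma mem_Ico_orbitIndex (hp : p < g p) (hx : x ∈ gap (FixedPts g) p) :
    x ∈ Ico ((g ^ orbitIndex g p x) p) ((g ^ (orbitIndex g p x + 1)) p) := by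
  obtain ⟨k, hk⟩ := exists_zpow_apply_le hp hx
  obtain ⟨K, hK⟩ := exists_lt_zpow_apply hp hx
  have hbdd : BddAbove {k : ℤ | (g ^ k) p ≤ x} := ⟨K, fun j hj =>
    ((strictMono_zpow_apply hp).lt_iff_lt.1 (lt_of_le_of_lt hj hK)).le⟩
  have hnext : orbitIndex g p x + 1 ∉ {k : ℤ | (g ^ k) p ≤ x} :=
    notMem_of_csSup_lt (lt_add_one _) hbdd
  exact ⟨Int.csSup_mem ⟨k, hk⟩ hbdd, not_le.1 hnext⟩

lemma orbitIndex_eq (hp : p < g p) (hx : x ∈ Ico ((g ^ n) p) ((g ^ (n + 1)) p)) :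
    orbitIndex g p x = n :=
  IsGreatest.csSup_eq ⟨hx.1, fun _ hk =>
    Int.lt_add_one_iff.1 ((strictMono_zpow_apply hp).lt_iff_lt.1 (lt_of_le_of_lt hk hx.2))⟩

end Orbit

noncomputable def orbitConj (g h : ℝ ≃o ℝ) (p x : ℝ) : ℝ :=
  (h ^ orbitIndex g p x) (rescale (g p) (h p) p ((g ^ orbitIndex g p x).symm x))

section OrbitConj

variable {g h : ℝ ≃o ℝ} {p x : ℝ} {n : ℤ}

lemma orbitConj_eq (hg : p < g p) (hx : x ∈ Ico ((g ^ n) p) ((g ^ (n + 1)) p)) :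
    orbitConj g h p x = (h ^ n) (rescale (g p) (h p) p ((g ^ n).symm x)) := by
  rw [orbitConj, orbitIndex_eq hg hx]

lemma orbitConj_mem_Ico (hg : p < g p) (hh : p < h p)
    (hx : x ∈ Ico ((g ^ n) p) ((g ^ (n + 1)) p)) :
    orbitConj g h p x ∈ Ico ((h ^ n) p) ((h ^ (n + 1)) p) := by
  rw [orbitConj_eq hg hx, mem_Ico_zpow_apply_iff, OrderIso.symm_apply_apply]
  exact rescale_mapsTo_Ico hg hh (mem_Ico_zpow_apply_iff.1 hx)

lemma orbitConj_orbitConj (hg : p < g p) (hh : p < h p) (hx : x ∈ gap (FixedPts g) p) :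
    orbitConj h g p (orbitConj g h p x) = x := by
  have hn := mem_Ico_orbitIndex hg hx
  rw [orbitConj_eq hh (orbitConj_mem_Ico hg hh hn), orbitConj_eq hg hn,
    OrderIso.symm_apply_apply, rescale_rescale hg.ne' hh.ne', OrderIso.apply_symm_apply]

lemma orbitConj_apply (hg : p < g p) (hx : x ∈ gap (FixedPts g) p) :
    orbitConj g h p (g x) = h (orbitConj g h p x) := by
  have hn := mem_Ico_orbitIndex hg hx
  set n := orbitIndex g p x
  have hsymm : (g ^ (n + 1)).symm (g x) = (g ^ n).symm x := by
    rw [OrderIso.symm_apply_eq, zpow_add_one_apply, OrderIso.apply_symm_apply]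
  have hn' : g x ∈ Ico ((g ^ (n + 1)) p) ((g ^ (n + 1 + 1)) p) := by
    rw [mem_Ico_zpow_apply_iff, hsymm]
    exact mem_Ico_zpow_apply_iff.1 hn
  rw [orbitConj_eq hg hn', orbitConj_eq hg hn, hsymm, zpow_add_one_apply]

lemma strictMonoOn_orbitConj (hg : p < g p) (hh : p < h p) :
    StrictMonoOn (orbitConj g h p) (gap (FixedPts g) p) := by
  intro x hx y hy hxy
  obtain ⟨n, hn⟩ : ∃ n, x ∈ Ico ((g ^ n) p) ((g ^ (n + 1)) p) := ⟨_, mem_Ico_orbitIndex hg hx⟩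
  obtain ⟨m, hm⟩ : ∃ m, y ∈ Ico ((g ^ m) p) ((g ^ (m + 1)) p) := ⟨_, mem_Ico_orbitIndex hg hy⟩
  have hnm : n ≤ m := by
    by_contra! hmn
    have := (strictMono_zpow_apply hg).monotone (Int.add_one_le_iff.2 hmn)
    linarith [hn.1, hm.2]
  rcases hnm.eq_or_lt with rfl | hlt
  · rw [orbitConj_eq hg hn, orbitConj_eq hg hm]
    exact (h ^ n).strictMono (rescale_strictMono hg hh ((g ^ n).symm.strictMono hxy))
  · calc orbitConj g h p x < (h ^ (n + 1)) p := (orbitConj_mem_Ico hg hh hn).2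
      _ ≤ (h ^ m) p := (strictMono_zpow_apply hh).monotone (Int.add_one_le_iff.2 hlt)
      _ ≤ orbitConj g h p y := (orbitConj_mem_Ico hg hh hm).1

lemma mapsTo_orbitConj (hfix : FixedPts g = FixedPts h) (hg : p < g p) (hh : p < h p) :
    MapsTo (orbitConj g h p) (gap (FixedPts g) p) (gap (FixedPts g) p) := fun _ hx => by
  rw [hfix]
  exact Ico_zpow_apply_subset_gap hh.ne' _ (orbitConj_mem_Ico hg hh (mem_Ico_orbitIndex hg hx))

lemma surjOn_orbitConj (hfix : FixedPts g = FixedPts h) (hg : p < g p) (hh : p < h p) :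
    SurjOn (orbitConj g h p) (gap (FixedPts g) p) (gap (FixedPts g) p) := by
  have hinv : LeftInvOn (orbitConj g h p) (orbitConj h g p) (gap (FixedPts g) p) :=
    fun _ hx => orbitConj_orbitConj hh hg (hfix ▸ hx)
  exact hinv.surjOn (hfix ▸ mapsTo_orbitConj hfix.symm hh hg)

end OrbitConj

section EqOn

variable {g h : ℝ ≃o ℝ} {J : Set ℝ} {p x y : ℝ} {m : ℕ}

lemma pow_apply_eq_of_eqOn (heq : EqOn g h J) {y : ℝ} :
    ∀ m : ℕ, (∀ k < m, (g ^ k) y ∈ J) → (h ^ m) y = (g ^ m) y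
  | 0, _ => rfl
  | m + 1, hJ => by
    rw [pow_succ', pow_succ', RelIso.mul_apply, RelIso.mul_apply,
      pow_apply_eq_of_eqOn heq m fun k hk => hJ k (by omega), heq (hJ m (by omega))]

lemma pow_apply_eq_of_mem_Ico_of_pow_apply_mem (hJ : J.OrdConnected) (heq : EqOn g h J)
    (hpJ : p ∈ J) (hy : y ∈ Ico p (g p)) (hyg : y ≤ g y) (hyJ : (g ^ m) y ∈ J) :
    (h ^ m) y = (g ^ m) y := by
  have hmono : Monotone fun k : ℕ => (g ^ k) y := by
    simpa only [coe_pow] using g.monotone.monotone_iterate_of_le_map hyg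
  exact pow_apply_eq_of_eqOn heq m fun k hk =>
    hJ.out hpJ hyJ ⟨hy.1.trans (hmono k.zero_le), hmono hk.le⟩

lemma pow_apply_eq_of_mem_of_pow_apply_mem_Ico (hJ : J.OrdConnected) (heq : EqOn g h J)
    (hpJ : p ∈ J) (hxJ : x ∈ J) (hxg : x ≤ g x) (hx : (g ^ m) x ∈ Ico p (g p)) :
    (h ^ m) x = (g ^ m) x := by
  have hmono : Monotone fun k : ℕ => (g ^ k) x := by
    simpa only [coe_pow] using g.monotone.monotone_iterate_of_le_map hxg
  refine pow_apply_eq_of_eqOn heq m fun k hk => hJ.out hxJ hpJ ⟨hmono k.zero_le, ?_⟩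
  have : g ((g ^ k) x) < g p := by
    simpa only [pow_succ', RelIso.mul_apply] using (hmono (Nat.succ_le_of_lt hk)).trans_lt hx.2
  exact (g.lt_iff_lt.1 this).le

lemma orbitConj_eq_self (hJ : J.OrdConnected) (heq : EqOn g h J) (hpJ : p ∈ J) (hg : p < g p)
    (hx : x ∈ gap (FixedPts g) p) (hxJ : x ∈ J) : orbitConj g h p x = x := by
  obtain ⟨n, hn⟩ : ∃ n, x ∈ Ico ((g ^ n) p) ((g ^ (n + 1)) p) := ⟨_, mem_Ico_orbitIndex hg hx⟩
  have hy : (g ^ n).symm x ∈ Ico p (g p) := mem_Ico_zpow_apply_iff.1 hn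
  have hyg : (g ^ n).symm x ≤ g ((g ^ n).symm x) :=
    (lt_apply_of_mem_gap (Ico_zpow_apply_subset_gap hg.ne' 0 (by simpa using hy)) hg).le
  rw [orbitConj_eq hg hn, ← heq hpJ, rescale_self hg.ne']
  obtain ⟨m, rfl | rfl⟩ := Int.eq_nat_or_neg n
  · have hyx : (g ^ m) ((g ^ (m : ℤ)).symm x) = x := by
      rw [← zpow_natCast, OrderIso.apply_symm_apply]
    rw [zpow_natCast,
      pow_apply_eq_of_mem_Ico_of_pow_apply_mem hJ heq hpJ hy hyg (by rwa [hyx]), hyx]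
  · have hxy : (g ^ m) x = (g ^ (-(m : ℤ))).symm x := by
      change _ = (g ^ (-(m : ℤ)))⁻¹ x
      rw [zpow_neg, inv_inv, zpow_natCast]
    rw [zpow_neg, zpow_natCast]
    change (h ^ m).symm _ = x
    rw [OrderIso.symm_apply_eq, hxy.symm, pow_apply_eq_of_mem_of_pow_apply_mem_Ico hJ heq hpJ hxJ
      (lt_apply_of_mem_gap hx hg).le (hxy ▸ hy)]

end EqOn

structure IsConjOn (g h : ℝ ≃o ℝ) (C J : Set ℝ) (θ : ℝ → ℝ) : Prop where
  strictMonoOn : StrictMonoOn θ C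
  mapsTo : MapsTo θ C C
  surjOn : SurjOn θ C C
  conj : ∀ x ∈ C, θ (g x) = h (θ x)
  eq_self : ∀ x ∈ C ∩ J, θ x = x

section Component

variable {g h : ℝ ≃o ℝ} {J : Set ℝ} {x₀ : ℝ}

lemma exists_isConjOn_gap_of_lt (hfix : FixedPts g = FixedPts h) (hJ : J.OrdConnected)
    (heq : EqOn g h J) (hg : x₀ < g x₀) (hh : x₀ < h x₀) :
    ∃ θ, IsConjOn g h (gap (FixedPts g) x₀) J θ := by
  set C := gap (FixedPts g) x₀
  obtain ⟨p, hpC, hpJ⟩ : ∃ p ∈ C, (C ∩ J).Nonempty → p ∈ J := by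
    by_cases hCJ : (C ∩ J).Nonempty
    · exact ⟨hCJ.some, hCJ.some_mem.1, fun _ => hCJ.some_mem.2⟩
    · exact ⟨x₀, mem_gap_self hg.ne', fun hne => absurd hne hCJ⟩
  have hgp : p < g p := lt_apply_of_mem_gap hpC hg
  have hhp : p < h p := lt_apply_of_mem_gap (hfix ▸ hpC) hh
  have hCp : gap (FixedPts g) p = C := gap_eq_of_mem hpC
  refine ⟨orbitConj g h p, ?_⟩
  rw [← hCp]
  exact ⟨strictMonoOn_orbitConj hgp hhp, mapsTo_orbitConj hfix hgp hhp,
    surjOn_orbitConj hfix hgp hhp, fun x hx => orbitConj_apply hgp hx,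
    fun x hx => orbitConj_eq_self hJ heq (hpJ ⟨x, hCp ▸ hx⟩) hgp hx.1 hx.2⟩

/-- On a gap where `g` moves points to the left, apply the previous lemma to `g⁻¹` and `h⁻¹`,
which agree on `g '' J`. -/
lemma exists_isConjOn_gap (hfix : FixedPts g = FixedPts h) (hinc : IncPts g = IncPts h)
    (hJ : J.OrdConnected) (heq : EqOn g h J) (hx₀ : x₀ ∉ FixedPts g) :
    ∃ θ, IsConjOn g h (gap (FixedPts g) x₀) J θ := by
  rcases Ne.lt_or_gt hx₀ with hlt | hgt
  · have hh : h x₀ < x₀ := by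
      have hfix₀ : x₀ ∉ FixedPts h := hfix ▸ hx₀
      have hinc₀ : x₀ ∉ IncPts h := hinc ▸ (hlt.not_gt : x₀ ∉ IncPts g)
      exact lt_of_le_of_ne (not_lt.1 hinc₀) hfix₀
    have heq' : EqOn ⇑(g⁻¹) ⇑(h⁻¹) (g '' J) := by
      rintro _ ⟨y, hy, rfl⟩
      rw [RelIso.inv_apply_self, heq hy, RelIso.inv_apply_self]
    obtain ⟨θ, hθ⟩ := exists_isConjOn_gap_of_lt (g := g⁻¹) (h := h⁻¹)
      (by rw [fixedPts_inv, fixedPts_inv, hfix]) (ordConnected_image g) heq'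
      (g.lt_symm_apply.2 hlt) (h.lt_symm_apply.2 hh)
    rw [fixedPts_inv] at hθ
    have hgC : ∀ x ∈ gap (FixedPts g) x₀, g x ∈ gap (FixedPts g) x₀ := fun x hx =>
      mem_gap_trans hx (apply_mem_gap (notMem_of_mem_gap hx))
    have hconj : ∀ x ∈ gap (FixedPts g) x₀, θ (g x) = h (θ x) := fun x hx => by
      have := hθ.conj (g x) (hgC x hx)
      rw [RelIso.inv_apply_self] at this
      exact (h.symm_apply_eq.1 this.symm)
    refine ⟨θ, hθ.strictMonoOn, hθ.mapsTo, hθ.surjOn, hconj, fun x hx => h.injective ?_⟩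
    rw [← hconj x hx.1, hθ.eq_self (g x) ⟨hgC x hx.1, mem_image_of_mem g hx.2⟩, heq hx.2]
  · exact exists_isConjOn_gap_of_lt hfix hJ heq hgt (show x₀ ∈ IncPts h from hinc ▸ hgt)

end Component

open Classical in
noncomputable def glue (F : Set ℝ) (Θ : Set ℝ → ℝ → ℝ) (x : ℝ) : ℝ :=
  if x ∈ F then x else Θ (gap F x) x

section Glue

variable {F : Set ℝ} {Θ : Set ℝ → ℝ → ℝ} {x y : ℝ}

lemma glue_of_mem (hx : x ∈ F) : glue F Θ x = x := by simp [glue, hx]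

lemma glue_of_mem_gap (hx : x ∈ gap F y) : glue F Θ x = Θ (gap F y) x := by
  simp [glue, notMem_of_mem_gap hx, gap_eq_of_mem hx]

lemma strictMono_glue (hmono : ∀ x ∉ F, StrictMonoOn (Θ (gap F x)) (gap F x))
    (hmaps : ∀ x ∉ F, MapsTo (Θ (gap F x)) (gap F x) (gap F x)) : StrictMono (glue F Θ) := by
  have hsep : ∀ z ∈ F, ∀ x, (z < x → z < glue F Θ x) ∧ (x < z → glue F Θ x < z) := by
    intro z hz x
    by_cases hx : x ∈ F
    · simp [glue_of_mem hx]
    have hgap : glue F Θ x ∈ gap F x := by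
      rw [glue_of_mem_gap (mem_gap_self hx)]
      exact hmaps x hx (mem_gap_self hx)
    constructor <;> intro hzx <;> by_contra! h <;> exact hgap z (by rw [mem_uIcc]; grind) hz
  intro x y hxy
  by_cases hxF : x ∈ F
  · simpa only [glue_of_mem hxF] using (hsep x hxF y).1 hxy
  by_cases hyF : y ∈ F
  · simpa only [glue_of_mem hyF] using (hsep y hyF x).2 hxy
  by_cases hy : y ∈ gap F x
  · rw [glue_of_mem_gap (mem_gap_self hxF), glue_of_mem_gap hy]
    exact hmono x hxF (mem_gap_self hxF) hy hxy
  obtain ⟨z, hz, hzF⟩ : ∃ z ∈ uIcc x y, z ∈ F := by simpa [gap] using hy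
  rw [uIcc_of_le hxy.le] at hz
  have hxz : x < z := lt_of_le_of_ne hz.1 (by rintro rfl; exact hxF hzF)
  have hzy : z < y := lt_of_le_of_ne hz.2 (by rintro rfl; exact hyF hzF)
  exact ((hsep z hzF x).2 hxz).trans ((hsep z hzF y).1 hzy)

lemma surjective_glue (hsurj : ∀ x ∉ F, SurjOn (Θ (gap F x)) (gap F x) (gap F x)) :
    Function.Surjective (glue F Θ) := by
  intro y
  by_cases hy : y ∈ F
  · exact ⟨y, glue_of_mem hy⟩
  obtain ⟨x, hx, hxy⟩ := hsurj y hy (mem_gap_self hy)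
  exact ⟨x, (glue_of_mem_gap hx).trans hxy⟩

end Glue

theorem exists_orderIso_conj {g h : ℝ ≃o ℝ} {J : Set ℝ} (hfix : FixedPts g = FixedPts h)
    (hinc : IncPts g = IncPts h) (hJ : J.OrdConnected) (heq : EqOn g h J) :
    ∃ θ : ℝ ≃o ℝ, (∀ x, θ (g x) = h (θ x)) ∧ (∀ x ∈ J, θ x = x) ∧
      ∀ x ∈ FixedPts g, θ x = x := by
  have hgaps : ∀ C : Set ℝ, ∃ θ : ℝ → ℝ,
      ∀ x ∉ FixedPts g, gap (FixedPts g) x = C → IsConjOn g h C J θ := by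
    intro C
    by_cases hC : ∃ x ∉ FixedPts g, gap (FixedPts g) x = C
    · obtain ⟨x, hx, rfl⟩ := hC
      obtain ⟨θ, hθ⟩ := exists_isConjOn_gap hfix hinc hJ heq hx
      exact ⟨θ, fun _ _ _ => hθ⟩
    · push Not at hC
      exact ⟨id, fun x hx hxC => absurd hxC (hC x hx)⟩
  choose Θ hΘ using hgaps
  have hΘ' : ∀ x ∉ FixedPts g, IsConjOn g h (gap (FixedPts g) x) J (Θ (gap (FixedPts g) x)) :=
    fun x hx => hΘ _ x hx rfl
  refine ⟨StrictMono.orderIsoOfSurjective (glue (FixedPts g) Θ)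
    (strictMono_glue (fun x hx => (hΘ' x hx).strictMonoOn) fun x hx => (hΘ' x hx).mapsTo)
    (surjective_glue fun x hx => (hΘ' x hx).surjOn), fun x => ?_, fun x hxJ => ?_,
    fun x hx => glue_of_mem hx⟩
  · change glue _ Θ (g x) = h (glue _ Θ x)
    by_cases hx : x ∈ FixedPts g
    · rw [show g x = x from hx, glue_of_mem hx, show x ∈ FixedPts h from hfix ▸ hx]
    rw [glue_of_mem_gap (apply_mem_gap hx), glue_of_mem_gap (mem_gap_self hx)]
    exact (hΘ' x hx).conj x (mem_gap_self hx)
  · change glue _ Θ x = x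
    by_cases hx : x ∈ FixedPts g
    · exact glue_of_mem hx
    rw [glue_of_mem_gap (mem_gap_self hx)]
    exact (hΘ' x hx).eq_self x ⟨mem_gap_self hx, hxJ⟩

lemma fixedPts_conj (ψ φ : ℝ ≃o ℝ) : FixedPts (ψ * φ * ψ⁻¹) = ψ '' FixedPts φ := by
  ext y
  obtain ⟨x, rfl⟩ := ψ.surjective y
  simp [FixedPts, ψ.injective.mem_set_image, RelIso.mul_apply, RelIso.inv_apply_self]

lemma incPts_conj (ψ φ : ℝ ≃o ℝ) : IncPts (ψ * φ * ψ⁻¹) = ψ '' IncPts φ := by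
  ext y
  obtain ⟨x, rfl⟩ := ψ.surjective y
  simp [IncPts, ψ.injective.mem_set_image, RelIso.mul_apply, RelIso.inv_apply_self]

end LineHomeo

/-- Promotion of a weak conjugation that is strong on an interval `I` to a genuine
conjugation agreeing with it on `I ∪ φ₁(I)` and on `Fix φ₁`. -/
theorem promotion (ψ φ₁ φ₂ : ℝ ≃o ℝ) (I : Set ℝ) (hI : I.OrdConnected)
    (hfix : ψ '' FixedPts φ₁ = FixedPts φ₂)
    (hinc : ψ '' IncPts φ₁ = IncPts φ₂)
    (hstrong : ∀ x ∈ I, ψ (φ₁ x) = φ₂ (ψ x)) :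
    ∃ ψb : ℝ ≃o ℝ,
      (∀ x : ℝ, ψb (φ₁ x) = φ₂ (ψb x)) ∧
      (∀ x ∈ I, ψb x = ψ x) ∧
      (∀ x ∈ FixedPts φ₁, ψb x = ψ x) ∧
      (∀ x ∈ I ∪ (fun y => φ₁ y) '' I, ψb x = ψ x) := by
  have hG : ∀ x, (ψ * φ₁ * ψ⁻¹) (ψ x) = ψ (φ₁ x) := fun x => by
    simp [RelIso.mul_apply, RelIso.inv_apply_self]
  obtain ⟨θ, hθconj, hθI, hθfix⟩ :=
    LineHomeo.exists_orderIso_conj (g := ψ * φ₁ * ψ⁻¹) (h := φ₂)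
      (by rw [LineHomeo.fixedPts_conj, hfix]) (by rw [LineHomeo.incPts_conj, hinc])
      (Set.ordConnected_image ψ (hs := hI)) (by rintro _ ⟨x, hx, rfl⟩; rw [hG, hstrong x hx])
  have hconj : ∀ x, θ (ψ (φ₁ x)) = φ₂ (θ (ψ x)) := fun x => by rw [← hG, hθconj]
  have hI' : ∀ x ∈ I, θ (ψ x) = ψ x := fun x hx => hθI _ (Set.mem_image_of_mem ψ hx)
  refine ⟨ψ.trans θ, hconj, hI', fun x hx => hθfix _ ?_, ?_⟩
  · rw [LineHomeo.fixedPts_conj]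
    exact Set.mem_image_of_mem ψ hx
  · rintro _ (hx | ⟨x, hx, rfl⟩)
    · exact hI' _ hx
    · change θ (ψ (φ₁ x)) = ψ (φ₁ x)
      rw [hconj, hI' x hx, hstrong x hx]
end

section
/- Let φ₁, φ₂ ∈ Homeo₊(ℝ). If there exists ψ ∈ Homeo₊(ℝ) with ψ(Fix(φ₁)) = Fix(φ₂) and ψ(Inc(φ₁)) = Inc(φ₂), then φ₁ and φ₂ are conjugate in Homeo₊(ℝ), i.e. there exists ψ̄ ∈ Homeo₊(ℝ) with ψ̄ ∘ φ₁ ∘ ψ̄⁻¹ = φ₂. -/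
/-!
Conjugating `φ₂` by `ψ` reduces the theorem to the case `Fix φ₂ = Fix φ₁` and `Inc φ₂ = Inc φ₁`.
Both maps then preserve every order-connected component `C` of the complement of the common fixed
set, and move the points of `C` in the same direction; replacing both maps by their inverses if
needed, they move them to the right. For `t ∈ C` and `f` either map, the orbit chart
`(n, u) ↦ fⁿ u` is an order isomorphism from `ℤ ×ₗ [t, f t)` onto `C`: it is onto because the
supremum (infimum) of an orbit bounded above (below) would be a fixed point in `C`. In these charts
both maps become the shift `n ↦ n + 1`, so transporting an affine bijection
`[t, φ₁ t) → [t, φ₂ t)` through them conjugates `φ₁` to `φ₂` on `C`. Gluing these conjugacies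
with the identity on the fixed set gives an increasing bijection of `ℝ`, because a fixed point
lying between two points separates their images.
-/

open Set Function

section LinearOrder

variable {α : Type*} [LinearOrder α]

theorem apply_mem_ordConnectedComponent_compl {F : Set α} {g : α → α} (hg : StrictMono g)
    (hgF : ∀ z ∈ F, g z = z) {x : α} (hx : x ∉ F) : g x ∈ ordConnectedComponent Fᶜ x := by
  rw [mem_ordConnectedComponent]
  rintro z hz (hzF : z ∈ F)
  rcases mem_uIcc.1 hz with ⟨hxz, hzg⟩ | ⟨hgz, hzx⟩
  · have := hg (hxz.lt_of_ne (ne_of_mem_of_not_mem hzF hx).symm)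
    exact (hgF z hzF ▸ this).not_ge hzg
  · have := hg (hzx.lt_of_ne (ne_of_mem_of_not_mem hzF hx))
    exact (hgF z hzF ▸ this).not_ge hgz

theorem Monotone.exists_mem_Ico_add_one {g : ℤ → α} (hg : Monotone g) {x : α}
    (hlo : ∃ n, g n ≤ x) (hhi : ∃ n, x < g n) : ∃ n, x ∈ Ico (g n) (g (n + 1)) := by
  obtain ⟨m, hm⟩ := hhi
  obtain ⟨n, hn, hmax⟩ :=
    Int.exists_greatest_of_bdd ⟨m, fun k hk => (hg.reflect_lt (hk.trans_lt hm)).le⟩ hlo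
  exact ⟨n, hn, lt_of_not_ge fun h => (hmax _ h).not_gt (lt_add_one n)⟩

open Classical in
noncomputable def glueComponents (s : Set α) (L : α → α → α) (x : α) : α :=
  if hx : x ∈ s then L (ordConnectedProj s ⟨x, hx⟩) x else x

namespace glueComponents

variable {s : Set α} {L : α → α → α}

theorem apply_of_notMem {x : α} (hx : x ∉ s) : glueComponents s L x = x := dif_neg hx

theorem exists_eqOn {x : α} (hx : x ∈ s) : ∃ t ∈ s, x ∈ ordConnectedComponent s t ∧
    EqOn (glueComponents s L) (L t) (ordConnectedComponent s t) := by
  refine ⟨ordConnectedProj s ⟨x, hx⟩,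
    ordConnectedComponent_subset (ordConnectedProj_mem_ordConnectedComponent s ⟨x, hx⟩),
    mem_ordConnectedComponent_ordConnectedProj s ⟨x, hx⟩, fun y hy => ?_⟩
  rw [glueComponents, dif_pos (ordConnectedComponent_subset hy), ordConnectedProj_eq.2]
  exact mem_ordConnectedComponent.1 <| mem_ordConnectedComponent_trans
    (mem_ordConnectedComponent_comm.1 hy) (mem_ordConnectedComponent_ordConnectedProj s ⟨x, hx⟩)

theorem apply_mem_ordConnectedComponent
    (hmaps : ∀ t ∈ s, MapsTo (L t) (ordConnectedComponent s t) (ordConnectedComponent s t))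
    {x : α} (hx : x ∈ s) : glueComponents s L x ∈ ordConnectedComponent s x := by
  obtain ⟨t, ht, hxt, heq⟩ := exists_eqOn (L := L) hx
  rw [heq hxt, ← ordConnectedComponent_eq (mem_ordConnectedComponent.1 hxt)]
  exact hmaps t ht hxt

theorem apply_lt_of_lt_of_notMem
    (hmaps : ∀ t ∈ s, MapsTo (L t) (ordConnectedComponent s t) (ordConnectedComponent s t))
    {x z : α} (hz : z ∉ s) (hxz : x < z) : glueComponents s L x < z := by
  by_cases hx : x ∈ s
  · have h := mem_ordConnectedComponent.1 (apply_mem_ordConnectedComponent hmaps hx)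
    exact lt_of_not_ge fun hzg => hz (h (Icc_subset_uIcc ⟨hxz.le, hzg⟩))
  · rwa [apply_of_notMem hx]

theorem lt_apply_of_notMem_of_lt
    (hmaps : ∀ t ∈ s, MapsTo (L t) (ordConnectedComponent s t) (ordConnectedComponent s t))
    {y z : α} (hz : z ∉ s) (hzy : z < y) : z < glueComponents s L y := by
  by_cases hy : y ∈ s
  · have h := mem_ordConnectedComponent.1 (apply_mem_ordConnectedComponent hmaps hy)
    exact lt_of_not_ge fun hgz => hz (h (Icc_subset_uIcc' ⟨hgz, hzy.le⟩))
  · rwa [apply_of_notMem hy]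

theorem strictMono
    (hmaps : ∀ t ∈ s, MapsTo (L t) (ordConnectedComponent s t) (ordConnectedComponent s t))
    (hmono : ∀ t ∈ s, StrictMonoOn (L t) (ordConnectedComponent s t)) :
    StrictMono (glueComponents s L) := by
  intro x y hxy
  by_cases hy : y ∈ ordConnectedComponent s x
  · obtain ⟨t, ht, hxt, heq⟩ :=
      exists_eqOn (L := L) (mem_ordConnectedComponent.1 hy left_mem_uIcc)
    have hyt := mem_ordConnectedComponent_trans hxt hy
    rw [heq hxt, heq hyt]
    exact hmono t ht hxt hyt hxy
  · obtain ⟨z, hz, hzs⟩ := not_subset.1 (mt mem_ordConnectedComponent.2 hy)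
    rw [uIcc_of_le hxy.le] at hz
    rcases hz.1.eq_or_lt with rfl | hxz
    · rw [apply_of_notMem hzs]
      exact lt_apply_of_notMem_of_lt hmaps hzs hxy
    · refine (apply_lt_of_lt_of_notMem hmaps hzs hxz).trans_le ?_
      rcases hz.2.eq_or_lt with rfl | hzy
      · rw [apply_of_notMem hzs]
      · exact (lt_apply_of_notMem_of_lt hmaps hzs hzy).le

theorem surjective
    (hsurj : ∀ t ∈ s, SurjOn (L t) (ordConnectedComponent s t) (ordConnectedComponent s t)) :
    Surjective (glueComponents s L) := by
  intro y
  by_cases hy : y ∈ s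
  · obtain ⟨t, ht, hyt, heq⟩ := exists_eqOn (L := L) hy
    obtain ⟨x, hxt, rfl⟩ := hsurj t ht hyt
    exact ⟨x, heq hxt⟩
  · exact ⟨y, apply_of_notMem hy⟩

theorem semiconj {f r : α → α} (hf : ∀ x ∈ s, f x ∈ ordConnectedComponent s x)
    (hfr : ∀ x ∉ s, f x = x ∧ r x = x)
    (hL : ∀ t ∈ s, ∀ x ∈ ordConnectedComponent s t, L t (f x) = r (L t x)) :
    Semiconj (glueComponents s L) f r := by
  intro x
  by_cases hx : x ∈ s
  · obtain ⟨t, ht, hxt, heq⟩ := exists_eqOn (L := L) hx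
    rw [heq hxt, heq (mem_ordConnectedComponent_trans hxt (hf x hx)), hL t ht x hxt]
  · rw [(hfr x hx).1, apply_of_notMem hx, (hfr x hx).2]

end glueComponents

end LinearOrder

theorem OrderIso.apply_ciSup_zpow_apply {α : Type*} [ConditionallyCompleteLattice α]
    (f : α ≃o α) {x : α} (hx : BddAbove (range fun n : ℤ => (f ^ n) x)) :
    f (⨆ n : ℤ, (f ^ n) x) = ⨆ n : ℤ, (f ^ n) x := by
  have h (n : ℤ) : f ((f ^ n) x) = (f ^ (1 + n)) x := by rw [zpow_one_add]; rfl
  simp_rw [f.map_ciSup hx, h]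
  exact (Equiv.addLeft (1 : ℤ)).iSup_comp (g := fun n => (f ^ n) x)

theorem OrderIso.apply_ciInf_zpow_apply {α : Type*} [ConditionallyCompleteLattice α]
    (f : α ≃o α) {x : α} (hx : BddBelow (range fun n : ℤ => (f ^ n) x)) :
    f (⨅ n : ℤ, (f ^ n) x) = ⨅ n : ℤ, (f ^ n) x := by
  have h (n : ℤ) : f ((f ^ n) x) = (f ^ (1 + n)) x := by rw [zpow_one_add]; rfl
  simp_rw [f.map_ciInf hx, h]
  exact (Equiv.addLeft (1 : ℤ)).iInf_comp (g := fun n => (f ^ n) x)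

section Orbits

variable {f : ℝ ≃o ℝ} {t x : ℝ}

theorem zpow_apply_eq_self_of_mem_fixedPts (hx : x ∈ FixedPts f) (n : ℤ) : (f ^ n) x = x :=
  (MulAction.stabilizer (ℝ ≃o ℝ) x).zpow_mem hx n

theorem fixedPts_inv (f : ℝ ≃o ℝ) : FixedPts f⁻¹ = FixedPts f :=
  ext fun x => (MulAction.stabilizer (ℝ ≃o ℝ) x).inv_mem_iff

theorem zpow_apply_mem_ordConnectedComponent (hx : x ∈ ordConnectedComponent (FixedPts f)ᶜ t)
    (n : ℤ) : (f ^ n) x ∈ ordConnectedComponent (FixedPts f)ᶜ t :=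
  mem_ordConnectedComponent_trans hx <| apply_mem_ordConnectedComponent_compl (f ^ n).strictMono
    (fun _ hz => zpow_apply_eq_self_of_mem_fixedPts hz n) (ordConnectedComponent_subset hx)

theorem mapsTo_ordConnectedComponent_fixedPts (f : ℝ ≃o ℝ) (t : ℝ) :
    MapsTo f (ordConnectedComponent (FixedPts f)ᶜ t) (ordConnectedComponent (FixedPts f)ᶜ t) :=
  fun _ hx => by simpa using zpow_apply_mem_ordConnectedComponent hx 1

theorem exists_lt_zpow_apply (hx : x ∈ ordConnectedComponent (FixedPts f)ᶜ t) :
    ∃ n : ℤ, x < (f ^ n) t := by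
  by_contra! h
  have hbdd : BddAbove (range fun n : ℤ => (f ^ n) t) := ⟨x, forall_mem_range.2 h⟩
  refine mem_ordConnectedComponent.1 hx (Icc_subset_uIcc ⟨?_, ciSup_le h⟩)
    (f.apply_ciSup_zpow_apply hbdd)
  simpa using le_ciSup hbdd 0

theorem exists_zpow_apply_le (hx : x ∈ ordConnectedComponent (FixedPts f)ᶜ t) :
    ∃ n : ℤ, (f ^ n) t ≤ x := by
  by_contra! h
  have hbdd : BddBelow (range fun n : ℤ => (f ^ n) t) :=
    ⟨x, forall_mem_range.2 fun n => (h n).le⟩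
  refine mem_ordConnectedComponent.1 hx (Icc_subset_uIcc' ⟨le_ciInf fun n => (h n).le, ?_⟩)
    (f.apply_ciInf_zpow_apply hbdd)
  simpa using ciInf_le hbdd 0

theorem strictMono_zpow_apply (hf : t < f t) : StrictMono fun n : ℤ => (f ^ n) t :=
  strictMono_int_of_lt_succ fun n => by rw [zpow_add_one]; exact (f ^ n).strictMono hf

def orbitChart (f : ℝ ≃o ℝ) (p : ℤ ×ₗ ℝ) : ℝ := (f ^ (ofLex p).1) (ofLex p).2

def orbitChartDomain (f : ℝ ≃o ℝ) (t : ℝ) : Set (ℤ ×ₗ ℝ) := {p | (ofLex p).2 ∈ Ico t (f t)}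

theorem strictMonoOn_orbitChart (hf : t < f t) :
    StrictMonoOn (orbitChart f) (orbitChartDomain f t) := by
  rintro ⟨n, u⟩ ⟨-, hu⟩ ⟨m, v⟩ ⟨hv, -⟩ hlt
  rcases Prod.Lex.toLex_lt_toLex.1 hlt with hnm | ⟨rfl, huv⟩
  · calc (f ^ n) u < (f ^ n) (f t) := (f ^ n).strictMono hu
      _ = (f ^ (n + 1)) t := by rw [zpow_add_one]; rfl
      _ ≤ (f ^ m) t := (strictMono_zpow_apply hf).monotone hnm
      _ ≤ (f ^ m) v := (f ^ m).monotone hv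
  · exact (f ^ n).strictMono huv

theorem mapsTo_orbitChart (hf : t < f t) :
    MapsTo (orbitChart f) (orbitChartDomain f t) (ordConnectedComponent (FixedPts f)ᶜ t) := by
  rintro ⟨n, u⟩ hu
  have ht : t ∈ ordConnectedComponent (FixedPts f)ᶜ t :=
    self_mem_ordConnectedComponent.2 hf.ne'
  exact zpow_apply_mem_ordConnectedComponent (OrdConnected.out inferInstance ht
    (mapsTo_ordConnectedComponent_fixedPts f t ht) (Ico_subset_Icc_self hu)) n

theorem surjOn_orbitChart (hf : t < f t) :
    SurjOn (orbitChart f) (orbitChartDomain f t) (ordConnectedComponent (FixedPts f)ᶜ t) := by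
  intro x hx
  obtain ⟨n, hn₁, hn₂⟩ := (strictMono_zpow_apply hf).monotone.exists_mem_Ico_add_one
    (exists_zpow_apply_le hx) (exists_lt_zpow_apply hx)
  refine ⟨toLex (n, (f ^ n).symm x), ⟨(f ^ n).le_symm_apply.2 hn₁, ?_⟩,
    (f ^ n).apply_symm_apply x⟩
  change (f ^ n).symm x < f t
  rw [(f ^ n).symm_apply_lt]
  rwa [zpow_add_one] at hn₂

theorem exists_zpow_apply_eq (hf : t < f t) (hx : x ∈ ordConnectedComponent (FixedPts f)ᶜ t) :
    ∃ n : ℤ, ∃ u ∈ Ico t (f t), (f ^ n) u = x := by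
  obtain ⟨⟨n, u⟩, hu, rfl⟩ := surjOn_orbitChart hf hx
  exact ⟨n, u, hu, rfl⟩

end Orbits

section Rescale

variable {𝕜 : Type*} [Field 𝕜] {t a b : 𝕜}

def rescale (t a b x : 𝕜) : 𝕜 := t + (b - t) / (a - t) * (x - t)

theorem rescale_rescale (ha : a ≠ t) (hb : b ≠ t) (x : 𝕜) :
    rescale t a b (rescale t b a x) = x := by
  have := sub_ne_zero.2 ha
  have := sub_ne_zero.2 hb
  simp only [rescale]
  field_simp
  ring

variable [LinearOrder 𝕜] [IsStrictOrderedRing 𝕜]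

theorem strictMono_rescale (ha : t < a) (hb : t < b) : StrictMono (rescale t a b) := by
  have := div_pos (sub_pos.2 hb) (sub_pos.2 ha)
  intro x y h
  unfold rescale
  gcongr

theorem mapsTo_rescale (ha : t < a) (hb : t < b) :
    MapsTo (rescale t a b) (Ico t a) (Ico t b) := by
  rintro x ⟨h₁, h₂⟩
  have hm := strictMono_rescale ha hb
  exact ⟨by simpa [rescale] using hm.monotone h₁,
    by simpa [rescale, sub_ne_zero.2 ha.ne'] using hm h₂⟩

theorem surjOn_rescale (ha : t < a) (hb : t < b) : SurjOn (rescale t a b) (Ico t a) (Ico t b) :=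
  fun y hy => ⟨rescale t b a y, mapsTo_rescale hb ha hy, rescale_rescale ha.ne' hb.ne' y⟩

end Rescale

structure IsConjOn {α : Type*} [Preorder α] (φ ρ : α ≃o α) (C : Set α) (L : α → α) : Prop where
  mapsTo : MapsTo L C C
  strictMonoOn : StrictMonoOn L C
  surjOn : SurjOn L C C
  semiconj : ∀ x ∈ C, L (φ x) = ρ (L x)

theorem IsConjOn.of_inv {α : Type*} [Preorder α] {φ ρ : α ≃o α} {C : Set α} {L : α → α}
    (h : IsConjOn φ⁻¹ ρ⁻¹ C L) (hC : MapsTo φ C C) : IsConjOn φ ρ C L where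
  mapsTo := h.mapsTo
  strictMonoOn := h.strictMonoOn
  surjOn := h.surjOn
  semiconj x hx := by
    have := h.semiconj (φ x) (hC hx)
    rw [RelIso.inv_apply_self] at this
    rw [this, RelIso.apply_inv_self]

section Conjugacy

variable {f r : ℝ ≃o ℝ} {t : ℝ}

noncomputable def localConj (f r : ℝ ≃o ℝ) (t x : ℝ) : ℝ :=
  let p := ofLex (invFunOn (orbitChart f) (orbitChartDomain f t) x)
  (r ^ p.1) (rescale t (f t) (r t) p.2)

theorem localConj_zpow_apply (hf : t < f t) {u : ℝ} (hu : u ∈ Ico t (f t)) (n : ℤ) :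
    localConj f r t ((f ^ n) u) = (r ^ n) (rescale t (f t) (r t) u) := by
  have h : invFunOn (orbitChart f) (orbitChartDomain f t) ((f ^ n) u) = toLex (n, u) :=
    (strictMonoOn_orbitChart hf).injOn.leftInvOn_invFunOn (x := toLex (n, u)) hu
  rw [localConj, h]
  rfl

theorem isConjOn_localConj (hFix : FixedPts r = FixedPts f) (hf : t < f t) (hr : t < r t) :
    IsConjOn f r (ordConnectedComponent (FixedPts f)ᶜ t) (localConj f r t) where
  mapsTo := by
    rintro _ hx
    obtain ⟨n, u, hu, rfl⟩ := exists_zpow_apply_eq hf hx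
    rw [localConj_zpow_apply hf hu, ← hFix]
    exact mapsTo_orbitChart hr (x := toLex (n, _)) (mapsTo_rescale hf hr hu)
  strictMonoOn := by
    rintro _ hx _ hy hxy
    obtain ⟨n, u, hu, rfl⟩ := exists_zpow_apply_eq hf hx
    obtain ⟨m, v, hv, rfl⟩ := exists_zpow_apply_eq hf hy
    rw [localConj_zpow_apply hf hu, localConj_zpow_apply hf hv]
    refine strictMonoOn_orbitChart hr (a := toLex (n, _)) (b := toLex (m, _))
      (mapsTo_rescale hf hr hu) (mapsTo_rescale hf hr hv) ?_
    have hlex := ((strictMonoOn_orbitChart hf).lt_iff_lt (a := toLex (n, u)) (b := toLex (m, v))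
      hu hv).1 hxy
    rcases Prod.Lex.toLex_lt_toLex.1 hlex with hnm | ⟨hnm, huv⟩
    · exact Prod.Lex.toLex_lt_toLex.2 (.inl hnm)
    · exact Prod.Lex.toLex_lt_toLex.2 (.inr ⟨hnm, strictMono_rescale hf hr huv⟩)
  surjOn := by
    intro y hy
    rw [← hFix] at hy
    obtain ⟨⟨m, v⟩, hv, rfl⟩ := surjOn_orbitChart hr hy
    obtain ⟨u, hu, rfl⟩ := surjOn_rescale hf hr hv
    exact ⟨(f ^ m) u, mapsTo_orbitChart hf (x := toLex (m, u)) hu, localConj_zpow_apply hf hu m⟩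
  semiconj := by
    rintro _ hx
    obtain ⟨n, u, hu, rfl⟩ := exists_zpow_apply_eq hf hx
    have hf' : f ((f ^ n) u) = (f ^ (1 + n)) u := by rw [zpow_one_add]; rfl
    rw [hf', localConj_zpow_apply hf hu, localConj_zpow_apply hf hu, zpow_one_add]
    rfl

open Classical in
noncomputable def componentConj (φ ρ : ℝ ≃o ℝ) (t : ℝ) : ℝ → ℝ :=
  if t < φ t then localConj φ ρ t else localConj φ⁻¹ ρ⁻¹ t

theorem isConjOn_componentConj {φ ρ : ℝ ≃o ℝ} (hFix : FixedPts ρ = FixedPts φ)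
    (hInc : IncPts ρ = IncPts φ) (ht : t ∉ FixedPts φ) :
    IsConjOn φ ρ (ordConnectedComponent (FixedPts φ)ᶜ t) (componentConj φ ρ t) := by
  unfold componentConj
  split_ifs with hφ
  · exact isConjOn_localConj hFix hφ (hInc ▸ hφ : t ∈ IncPts ρ)
  · have hφ' : φ t < t := lt_of_le_of_ne (not_lt.1 hφ) ht
    have hρ' : ρ t < t :=
      lt_of_le_of_ne (not_lt.1 (hInc ▸ hφ : t ∉ IncPts ρ)) (hFix ▸ ht : t ∉ FixedPts ρ)
    refine IsConjOn.of_inv ?_ (mapsTo_ordConnectedComponent_fixedPts φ t)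
    have := isConjOn_localConj (f := φ⁻¹) (r := ρ⁻¹) (t := t)
      (by rw [fixedPts_inv, fixedPts_inv, hFix]) (φ.lt_symm_apply.2 hφ') (ρ.lt_symm_apply.2 hρ')
    rwa [fixedPts_inv] at this

theorem exists_conj_of_fixedPts_eq_of_incPts_eq {φ ρ : ℝ ≃o ℝ} (hFix : FixedPts ρ = FixedPts φ)
    (hInc : IncPts ρ = IncPts φ) : ∃ χ : ℝ ≃o ℝ, χ * φ * χ⁻¹ = ρ := by
  have hL (t : ℝ) (ht : t ∈ (FixedPts φ)ᶜ) := isConjOn_componentConj hFix hInc ht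
  have hmono := glueComponents.strictMono (fun t ht => (hL t ht).mapsTo)
    fun t ht => (hL t ht).strictMonoOn
  have hsurj := glueComponents.surjective fun t ht => (hL t ht).surjOn
  have hsemi : Semiconj (glueComponents (FixedPts φ)ᶜ (componentConj φ ρ)) φ ρ :=
    glueComponents.semiconj
      (fun x hx => mapsTo_ordConnectedComponent_fixedPts φ x (self_mem_ordConnectedComponent.2 hx))
      (fun x hx => ⟨not_not.1 hx, (hFix ▸ not_not.1 hx : x ∈ FixedPts ρ)⟩)
      fun t ht => (hL t ht).semiconj
  set χ := hmono.orderIsoOfSurjective _ hsurj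
  exact ⟨χ, OrderIso.ext <| funext fun x => (hsemi _).trans (congrArg ρ (χ.apply_symm_apply x))⟩

end Conjugacy

theorem fixedPts_conj (ψ φ : ℝ ≃o ℝ) : FixedPts (ψ⁻¹ * φ * ψ) = ψ ⁻¹' FixedPts φ :=
  ext fun _ => ψ.symm_apply_eq

theorem incPts_conj (ψ φ : ℝ ≃o ℝ) : IncPts (ψ⁻¹ * φ * ψ) = ψ ⁻¹' IncPts φ :=
  ext fun _ => ψ.lt_symm_apply

/-- If some `ψ ∈ Homeo₊(ℝ)` matches the fixed sets and increasing sets of `φ₁` and `φ₂`,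
then `φ₁` and `φ₂` are conjugate in `Homeo₊(ℝ)`. -/
theorem weak_conjugation_implies_conjugation (φ₁ φ₂ : ℝ ≃o ℝ)
    (h : ∃ ψ : ℝ ≃o ℝ, ψ '' FixedPts φ₁ = FixedPts φ₂ ∧ ψ '' IncPts φ₁ = IncPts φ₂) :
    ∃ ψb : ℝ ≃o ℝ, ψb * φ₁ * ψb⁻¹ = φ₂ := by
  obtain ⟨ψ, hFix, hInc⟩ := h
  obtain ⟨χ, hχ⟩ := exists_conj_of_fixedPts_eq_of_incPts_eq (φ := φ₁) (ρ := ψ⁻¹ * φ₂ * ψ)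
    (by rw [fixedPts_conj, ← hFix, preimage_image_eq _ ψ.injective])
    (by rw [incPts_conj, ← hInc, preimage_image_eq _ ψ.injective])
  refine ⟨ψ * χ, ?_⟩
  calc ψ * χ * φ₁ * (ψ * χ)⁻¹ = ψ * (χ * φ₁ * χ⁻¹) * ψ⁻¹ := by group
    _ = φ₂ := by rw [hχ]; group
end

section
/- Let G be a countable group, let ≼ be an isolated left order on G, and let ρ : G → Homeo₊(ℝ) be a dynamical realization of ≼, i.e. a fixed-point-free representation such that for all f, g ∈ G one has f ≺ g if and only if ρ(f)(0) < ρ(g)(0). Then ρ is locally rigid: there exist a finite set S ⊆ G, a compact set K ⊆ ℝ and ε > 0 such that every fixed-point-free homomorphism ρ' : G → Homeo₊(ℝ) satisfying |ρ'(s)(x) − ρ(s)(x)| < ε for all s ∈ S and all x ∈ K is semi-conjugate to ρ. -/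
/-- A left-invariant total order on a group `G`. -/
structure LeftOrder (G : Type*) [Group G] where
  le : G → G → Prop
  refl : ∀ a, le a a
  trans : ∀ a b c, le a b → le b c → le a c
  antisymm : ∀ a b, le a b → le b a → a = b
  total : ∀ a b, le a b ∨ le b a
  mul_le_mul_left : ∀ a b, le a b → ∀ g, le (g * a) (g * b)

/-- The strict order associated to a left order. -/
def LeftOrder.lt {G : Type*} [Group G] (o : LeftOrder G) (a b : G) : Prop :=
  o.le a b ∧ a ≠ b

/-- A left order is isolated if it is the unique left order making each element of some
finite set of its positive elements positive. -/
def LeftOrder.Isolated {G : Type*} [Group G] (o : LeftOrder G) : Prop :=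
  ∃ S : Finset G, (∀ s ∈ S, o.lt 1 s) ∧
    ∀ o' : LeftOrder G, (∀ s ∈ S, o'.lt 1 s) → o'.le = o.le

/-- A representation is fixed-point-free if it has no global fixed point. -/
def FixedPointFree {G : Type*} [Group G] (ρ : G →* (ℝ ≃o ℝ)) : Prop :=
  ¬ ∃ x : ℝ, ∀ g : G, ρ g x = x

/-!
An isolated order `≼` is pinned down by finitely many strict inequalities `1 ≺ s`, `s ∈ S`, and
in the dynamical realization these read `0 < ρ s 0`, an open condition on `ρ`. For a perturbation
`ρ'` that still satisfies `0 < ρ' s 0`, comparing orbit points `ρ' g 0` and breaking ties by `≼`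
gives a left order in which every `s ∈ S` is positive, hence `≼` itself. So `ρ' f 0 < ρ' g 0`
forces `ρ f 0 < ρ g 0`, and `x ↦ sup {ρ g 0 | ρ' g 0 ≤ x}` is a semi-conjugacy from `ρ'` to `ρ`.
-/

open Set Filter Topology

section Orbit

variable {G α : Type*} [Group G]

lemma map_mul_apply [LE α] (ρ : G →* (α ≃o α)) (g h : G) (x : α) :
    ρ (g * h) x = ρ g (ρ h x) := by
  rw [map_mul, RelIso.mul_apply]

lemma map_one_apply [LE α] (ρ : G →* (α ≃o α)) (x : α) : ρ 1 x = x := by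
  rw [map_one, RelIso.one_apply]

lemma image_range_apply [LE α] (ρ : G →* (α ≃o α)) (h : G) (x₀ : α) :
    ρ h '' range (fun g => ρ g x₀) = range (fun g => ρ g x₀) := by
  have : ρ h ∘ (fun g => ρ g x₀) = (fun g => ρ g x₀) ∘ Equiv.mulLeft h :=
    funext fun g => (map_mul_apply ρ h g x₀).symm
  rw [← range_comp, this, (Equiv.mulLeft h).surjective.range_comp _]

variable [ConditionallyCompleteLattice α] (ρ : G →* (α ≃o α)) {x₀ : α}

lemma apply_csSup_range_apply (hbdd : BddAbove (range fun g => ρ g x₀)) (h : G) :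
    ρ h (sSup (range fun g => ρ g x₀)) = sSup (range fun g => ρ g x₀) := by
  rw [(ρ h).map_csSup' (range_nonempty fun g => ρ g x₀) hbdd, image_range_apply]

lemma apply_csInf_range_apply (hbdd : BddBelow (range fun g => ρ g x₀)) (h : G) :
    ρ h (sInf (range fun g => ρ g x₀)) = sInf (range fun g => ρ g x₀) := by
  rw [(ρ h).map_csInf' (range_nonempty fun g => ρ g x₀) hbdd, image_range_apply]

end Orbit

namespace FixedPointFree

variable {G : Type*} [Group G] {ρ : G →* (ℝ ≃o ℝ)}

lemma not_bddAbove_range_apply (hfree : FixedPointFree ρ) (x₀ : ℝ) :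
    ¬ BddAbove (range fun g => ρ g x₀) :=
  fun hbdd => hfree ⟨_, apply_csSup_range_apply ρ hbdd⟩

lemma not_bddBelow_range_apply (hfree : FixedPointFree ρ) (x₀ : ℝ) :
    ¬ BddBelow (range fun g => ρ g x₀) :=
  fun hbdd => hfree ⟨_, apply_csInf_range_apply ρ hbdd⟩

lemma exists_lt_apply (hfree : FixedPointFree ρ) (x₀ x : ℝ) : ∃ g, x < ρ g x₀ := by
  simpa using not_bddAbove_iff.1 (hfree.not_bddAbove_range_apply x₀) x

lemma exists_apply_lt (hfree : FixedPointFree ρ) (x₀ x : ℝ) : ∃ g, ρ g x₀ < x := by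
  simpa using not_bddBelow_iff.1 (hfree.not_bddBelow_range_apply x₀) x

end FixedPointFree

namespace LeftOrder

variable {G α : Type*} [Group G] [LinearOrder α]

def orbitLex (o : LeftOrder G) (ρ : G →* (α ≃o α)) (x₀ : α) : LeftOrder G where
  le f g := ρ f x₀ < ρ g x₀ ∨ (ρ f x₀ = ρ g x₀ ∧ o.le f g)
  refl a := Or.inr ⟨rfl, o.refl a⟩
  trans a b c := by
    have := o.trans a b c
    grind
  antisymm a b := by
    have := o.antisymm a b
    grind
  total a b := by
    have := o.total a b
    grind
  mul_le_mul_left a b hab g := by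
    simp only [map_mul_apply, (ρ g).lt_iff_lt, (ρ g).apply_eq_iff_eq]
    exact hab.imp_right fun h => ⟨h.1, o.mul_le_mul_left a b h.2 g⟩

lemma orbitLex_lt_of_apply_lt (o : LeftOrder G) {ρ : G →* (α ≃o α)} {x₀ : α} {f g : G}
    (h : ρ f x₀ < ρ g x₀) : (o.orbitLex ρ x₀).lt f g :=
  ⟨Or.inl h, by rintro rfl; exact h.false⟩

lemma lt_of_apply_lt_of_isolating {o : LeftOrder G} {S : Finset G}
    (huniq : ∀ o' : LeftOrder G, (∀ s ∈ S, o'.lt 1 s) → o'.le = o.le)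
    {ρ : G →* (α ≃o α)} {x₀ : α} (hS : ∀ s ∈ S, x₀ < ρ s x₀) {f g : G}
    (h : ρ f x₀ < ρ g x₀) : o.lt f g := by
  have hle : (o.orbitLex ρ x₀).le = o.le := huniq _ fun s hs =>
    o.orbitLex_lt_of_apply_lt (by rw [map_one_apply]; exact hS s hs)
  obtain ⟨hfg, hne⟩ := o.orbitLex_lt_of_apply_lt h
  exact ⟨hle ▸ hfg, hne⟩

end LeftOrder

section SemiConj

variable {G : Type*} [Group G] (ρ₁ ρ₂ : G →* (ℝ ≃o ℝ)) (x₀ y₀ : ℝ)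

def orbitBelow (x : ℝ) : Set ℝ := (fun g => ρ₂ g y₀) '' {g | ρ₁ g x₀ ≤ x}

noncomputable def orbitSemiConj (x : ℝ) : ℝ := sSup (orbitBelow ρ₁ ρ₂ x₀ y₀ x)

variable {ρ₁ ρ₂ x₀ y₀}

lemma orbitBelow_mono : Monotone (orbitBelow ρ₁ ρ₂ x₀ y₀) :=
  fun _ _ hxy => image_mono fun _ hg => le_trans hg hxy

lemma apply_mem_orbitBelow {g : G} {x : ℝ} (hg : ρ₁ g x₀ ≤ x) :
    ρ₂ g y₀ ∈ orbitBelow ρ₁ ρ₂ x₀ y₀ x :=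
  ⟨g, hg, rfl⟩

lemma orbitBelow_nonempty (hfree : FixedPointFree ρ₁) (x : ℝ) :
    (orbitBelow ρ₁ ρ₂ x₀ y₀ x).Nonempty :=
  let ⟨_, hg⟩ := hfree.exists_apply_lt x₀ x
  ⟨_, apply_mem_orbitBelow hg.le⟩

lemma image_orbitBelow (g : G) (x : ℝ) :
    ρ₂ g '' orbitBelow ρ₁ ρ₂ x₀ y₀ x = orbitBelow ρ₁ ρ₂ x₀ y₀ (ρ₁ g x) := by
  ext y
  constructor
  · rintro ⟨_, ⟨k, hk, rfl⟩, rfl⟩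
    exact ⟨g * k, by simpa [map_mul_apply] using hk, map_mul_apply ρ₂ g k y₀⟩
  · rintro ⟨h, hh, rfl⟩
    refine ⟨ρ₂ (g⁻¹ * h) y₀, ⟨g⁻¹ * h, ?_, rfl⟩, ?_⟩
    · show ρ₁ (g⁻¹ * h) x₀ ≤ x
      rwa [← (ρ₁ g).le_iff_le, ← map_mul_apply, mul_inv_cancel_left]
    · rw [← map_mul_apply, mul_inv_cancel_left]

variable (hord : ∀ f g : G, ρ₁ f x₀ < ρ₁ g x₀ → ρ₂ f y₀ < ρ₂ g y₀)
include hord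

lemma orbitBelow_subset_Iic {h : G} {x : ℝ} (hx : x < ρ₁ h x₀) :
    orbitBelow ρ₁ ρ₂ x₀ y₀ x ⊆ Iic (ρ₂ h y₀) := by
  rintro _ ⟨g, hg, rfl⟩
  exact (hord g h (hg.trans_lt hx)).le

lemma bddAbove_orbitBelow (hfree : FixedPointFree ρ₁) (x : ℝ) :
    BddAbove (orbitBelow ρ₁ ρ₂ x₀ y₀ x) :=
  let ⟨_, hh⟩ := hfree.exists_lt_apply x₀ x
  ⟨_, orbitBelow_subset_Iic hord hh⟩

theorem semiConjugate_of_orbit_lt_imp_lt (hfree₁ : FixedPointFree ρ₁)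
    (hfree₂ : FixedPointFree ρ₂) : SemiConjugate ρ₁ ρ₂ := by
  set c := orbitSemiConj ρ₁ ρ₂ x₀ y₀
  have hbdd := bddAbove_orbitBelow hord hfree₁
  have hne : ∀ x, (orbitBelow ρ₁ ρ₂ x₀ y₀ x).Nonempty := orbitBelow_nonempty hfree₁
  have hmono : Monotone c := fun x y hxy =>
    csSup_le_csSup (hbdd y) (hne x) (orbitBelow_mono hxy)
  refine ⟨c, ⟨hmono, ?_, ?_⟩, fun g x => ?_⟩
  · rintro ⟨M, hM⟩
    obtain ⟨g, hg⟩ := hfree₂.exists_lt_apply y₀ M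
    have : ρ₂ g y₀ ≤ c (ρ₁ g x₀) := le_csSup (hbdd _) (apply_mem_orbitBelow le_rfl)
    exact (hg.trans_le (this.trans (hM (mem_range_self _)))).false
  · rintro ⟨M, hM⟩
    obtain ⟨h, hh⟩ := hfree₂.exists_apply_lt y₀ M
    have : c (ρ₁ h x₀ - 1) ≤ ρ₂ h y₀ := csSup_le (hne _) (orbitBelow_subset_Iic hord (by linarith))
    exact (hh.trans_le' ((hM (mem_range_self _)).trans this)).false
  · simp only [c, orbitSemiConj, ← image_orbitBelow, (ρ₂ g).map_csSup' (hne x) (hbdd x)]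

end SemiConj

theorem isolated_order_dynamical_realization_locally_rigid_general
    {G : Type*} [Group G]
    (o : LeftOrder G) (hiso : o.Isolated)
    (ρ : G →* (ℝ ≃o ℝ)) (hfree : FixedPointFree ρ)
    (hreal : ∀ f g : G, o.lt f g ↔ ρ f 0 < ρ g 0) :
    ∃ (S : Finset G) (K : Set ℝ) (ε : ℝ), IsCompact K ∧ 0 < ε ∧
      ∀ ρ' : G →* (ℝ ≃o ℝ), FixedPointFree ρ' →
        (∀ s ∈ S, ∀ x ∈ K, |ρ' s x - ρ s x| < ε) →
        SemiConjugate ρ' ρ := by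
  obtain ⟨S, hSpos, huniq⟩ := hiso
  have hpos : ∀ s ∈ S, 0 < ρ s 0 := fun s hs => by
    simpa [map_one_apply] using (hreal 1 s).1 (hSpos s hs)
  obtain ⟨ε, hε, hεS⟩ : ∃ ε, 0 < ε ∧ ∀ s ∈ S, ε < ρ s 0 :=
    (eventually_mem_nhdsWithin.and <| (eventually_all_finset S).2 fun s hs =>
      nhdsWithin_le_nhds (eventually_lt_nhds (hpos s hs))).exists (f := 𝓝[>] (0 : ℝ))
  refine ⟨S, {0}, ε, isCompact_singleton, hε, fun ρ' hfree' hclose => ?_⟩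
  have hpos' : ∀ s ∈ S, 0 < ρ' s 0 := fun s hs => by
    linarith [(abs_lt.1 (hclose s hs 0 rfl)).1, hεS s hs]
  exact semiConjugate_of_orbit_lt_imp_lt
    (fun f g hfg => (hreal f g).1 (LeftOrder.lt_of_apply_lt_of_isolating huniq hpos' hfg))
    hfree' hfree

/-- The dynamical realization of an isolated left order of a countable group is locally rigid. -/
theorem isolated_order_dynamical_realization_locally_rigid
    {G : Type*} [Group G] [Countable G]
    (o : LeftOrder G) (hiso : o.Isolated)
    (ρ : G →* (ℝ ≃o ℝ)) (hfree : FixedPointFree ρ)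
    (hreal : ∀ f g : G, o.lt f g ↔ ρ f 0 < ρ g 0) :
    ∃ (S : Finset G) (K : Set ℝ) (ε : ℝ), IsCompact K ∧ 0 < ε ∧
      ∀ ρ' : G →* (ℝ ≃o ℝ), FixedPointFree ρ' →
        (∀ s ∈ S, ∀ x ∈ K, |ρ' s x - ρ s x| < ε) →
        SemiConjugate ρ' ρ :=
  isolated_order_dynamical_realization_locally_rigid_general o hiso ρ hfree hreal
end
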